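/- Let ε > 0. The one-dimensional function φ(t) = log γ₁([−εeᵗ, ∞)) = log(1 − T(εeᵗ)) is not concave on ℝ for sufficiently small ε, where γ₁ is the standard Gaussian measure on ℝ and T its tail function. -/

import Mathlib

/-!
A concave function on a line that is bounded below cannot increase anywhere: extending a
rising secant to the left would drive it to `-∞`. But `t ↦ log γ₁([-ε eᵗ, ∞))` is bounded below
by `log γ₁([0, ∞))` and strictly increasing, since the Gaussian measure charges every interval.
-/

open MeasureTheory Real Set ProbabilityTheory

theorem ConcaveOn.antitone_of_bddBelow {𝕜 : Type*} [Field 𝕜] [LinearOrder 𝕜]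
    [IsStrictOrderedRing 𝕜] {f : 𝕜 → 𝕜} (hf : ConcaveOn 𝕜 univ f)
    (hbdd : BddBelow (range f)) : Antitone f := by
  obtain ⟨m, hm⟩ := hbdd
  have hm : ∀ t, m ≤ f t := fun t => hm (mem_range_self t)
  intro x y hxy
  rcases hxy.eq_or_lt with rfl | hxy
  · exact le_rfl
  by_contra! hrise
  set s := (f y - f x) / (y - x)
  have hs : 0 < s := div_pos (sub_pos.mpr hrise) (sub_pos.mpr hxy)
  -- the point where the secant through `x` and `y` takes the value `m - s`
  set z := x - (f x - m) / s - 1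
  have hzx : z < x := by
    have : 0 ≤ (f x - m) / s := div_nonneg (sub_nonneg.mpr (hm x)) hs.le
    linarith
  have hslope : s ≤ (f x - f z) / (x - z) :=
    hf.slope_anti_adjacent (mem_univ z) (mem_univ y) hzx hxy
  have hfz : f z ≤ m - s := by
    rw [le_div_iff₀ (sub_pos.mpr hzx)] at hslope
    have : s * (x - z) = f x - m + s := by
      simp only [z]
      field_simp
      ring
    linarith
  linarith [hm z]

theorem gaussianReal_Ici_strictAnti (μ : ℝ) {v : NNReal} (hv : v ≠ 0) :
    StrictAnti fun x => (gaussianReal μ v (Ici x)).toReal := by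
  intro x y hxy
  have hIco : 0 < (gaussianReal μ v (Ico x y)).toReal := by
    refine ENNReal.toReal_pos (fun h0 => ?_) (measure_ne_top _ _)
    have := gaussianReal_absolutelyContinuous' μ hv h0
    simp only [Real.volume_Ico, ENNReal.ofReal_eq_zero, sub_nonpos] at this
    exact this.not_gt hxy
  have hsplit : (gaussianReal μ v).real (Ico x y ∪ Ici y)
      = (gaussianReal μ v).real (Ico x y) + (gaussianReal μ v).real (Ici y) :=
    measureReal_union ((Iio_disjoint_Ici le_rfl).mono_left Ico_subset_Iio_self) measurableSet_Ici
  rw [Ico_union_Ici_eq_Ici hxy.le] at hsplit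
  simp only [measureReal_def] at hsplit
  linarith

theorem gaussianReal_Ici_pos (μ : ℝ) {v : NNReal} (hv : v ≠ 0) (x : ℝ) :
    0 < (gaussianReal μ v (Ici x)).toReal :=
  ENNReal.toReal_nonneg.trans_lt (gaussianReal_Ici_strictAnti μ hv (lt_add_one x))

theorem stmt_14 :
    ∃ ε₀ > (0 : ℝ), ∀ ε ∈ Set.Ioo (0 : ℝ) ε₀,
      ¬ ConcaveOn ℝ Set.univ (fun t : ℝ =>
        Real.log ((ProbabilityTheory.gaussianReal 0 1 (Set.Ici (-(ε * Real.exp t)))).toReal)) := by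
  refine ⟨1, one_pos, fun ε hε hconc => ?_⟩
  set φ := fun t : ℝ => Real.log (gaussianReal 0 1 (Ici (-(ε * exp t)))).toReal
  have hG := gaussianReal_Ici_strictAnti 0 one_ne_zero
  have hpos := gaussianReal_Ici_pos 0 one_ne_zero
  have hφ_strictMono : StrictMono φ := fun s t hst =>
    Real.log_lt_log (hpos _) <| hG <| neg_lt_neg <|
      mul_lt_mul_of_pos_left (exp_lt_exp.mpr hst) hε.1
  have hφ_bddBelow : BddBelow (range φ) :=
    ⟨Real.log (gaussianReal 0 1 (Ici 0)).toReal, forall_mem_range.mpr fun t =>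
      Real.log_le_log (hpos 0) <| hG.antitone <|
        neg_nonpos.mpr (mul_nonneg hε.1.le (exp_pos t).le)⟩
  exact (hφ_strictMono zero_lt_one).not_ge (hconc.antitone_of_bddBelow hφ_bddBelow zero_le_one)
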